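/- Assume Hypotheses 1, 2 and 3. Then there is at most one continuous monotone solution of the stationary master equation; moreover, if such a solution exists, it is a monotone map on O_d. -/

import Mathlib

/-! Doubling of variables. For two solutions `U`, `V`, perturb `W(x, y) = ⟪U x - V y, x - y⟫`
by a small linear functional so that, by Stegall's principle, it has a strict minimum
`(x₀, y₀)` on `B_R × B_R`. Freezing one variable, `x₀` is an admissible test point for the
equation of `U` and `y₀` for that of `V`. Adding the two inequalities, the monotonicity of
`(G, F)` absorbs the data terms and `T(B_R) ⊆ B_R` bounds the nonlocal term by the minimality,
so `r W ≥ -C ε`, hence `W ≥ 0`. With `U = V` this is monotonicity; with `W ≥ 0` in both orders,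
letting `y → x` along the coordinate directions of `O_d` gives `U = V`. -/

open scoped RealInnerProductSpace
noncomputable section

/-- `ℝ^d` with the Euclidean inner product. -/
abbrev Euc (d : ℕ) := EuclideanSpace ℝ (Fin d)

/-- The positive orthant `O_d = (ℝ≥0)^d`. -/
def Od (d : ℕ) : Set (Euc d) := {x | ∀ i, 0 ≤ x i}

/-- `B_R = {x ∈ O_d : x_1 + ... + x_d ≤ R}`. -/
def Ball1 (d : ℕ) (R : ℝ) : Set (Euc d) := {x | x ∈ Od d ∧ ∑ i, x i ≤ R}

/-- Monotone solution of the stationary master equation (Definition 2.1), with threshold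
`R₁ ≥ R₀` where `R₀` is the constant of Hypothesis 2. -/
def IsMonotoneSolS (d : ℕ) (F G : Euc d → Euc d → Euc d) (r lam : ℝ)
    (T : Euc d →L[ℝ] Euc d) (R₀ : ℝ) (U : Euc d → Euc d) : Prop :=
  ContinuousOn U (Od d) ∧
  ∃ R₁ ≥ R₀, ∀ R ≥ R₁, ∀ V : Euc d, ∀ y ∈ Od d, ∀ x₀ ∈ Ball1 d R,
    (∀ x ∈ Ball1 d R, x ≠ x₀ → ⟪U x₀ - V, x₀ - y⟫ < ⟪U x - V, x - y⟫) →
    ⟪G x₀ (U x₀), x₀ - y⟫ + ⟪F x₀ (U x₀), U x₀ - V⟫ ≤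
      r * ⟪U x₀, x₀ - y⟫
        + lam * ⟪U x₀ - ContinuousLinearMap.adjoint T (U (T x₀)), x₀ - y⟫

open Filter Metric MeasureTheory Topology

theorem isClosed_Od (d : ℕ) : IsClosed (Od d) := by
  simp only [Od, Set.ofPred_forall]
  exact isClosed_iInter fun i => isClosed_le continuous_const (EuclideanSpace.proj i).continuous

theorem norm_le_of_mem_Ball1 {d : ℕ} {R : ℝ} {x : Euc d} (hx : x ∈ Ball1 d R) : ‖x‖ ≤ R := by
  obtain ⟨hx0, hxR⟩ := hx
  have hsq : ∑ i, ‖x i‖ ^ 2 ≤ (∑ i, x i) ^ 2 := by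
    simpa only [Real.norm_eq_abs, sq_abs] using
      Finset.sum_sq_le_sq_sum_of_nonneg fun i _ => hx0 i
  calc ‖x‖ = √(∑ i, ‖x i‖ ^ 2) := EuclideanSpace.norm_eq x
    _ ≤ √((∑ i, x i) ^ 2) := Real.sqrt_le_sqrt hsq
    _ = ∑ i, x i := Real.sqrt_sq (Finset.sum_nonneg fun i _ => hx0 i)
    _ ≤ R := hxR

theorem isCompact_Ball1 (d : ℕ) (R : ℝ) : IsCompact (Ball1 d R) := by
  refine isCompact_of_isClosed_isBounded ((isClosed_Od d).inter ?_)
    ((isBounded_closedBall (x := 0) (r := R)).subset fun x hx => ?_)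
  · exact isClosed_le (continuous_finsetSum _ fun i _ => (EuclideanSpace.proj i).continuous)
      continuous_const
  · exact mem_closedBall_zero_iff.2 (norm_le_of_mem_Ball1 hx)

theorem norm_le_of_mem_Ball1_prod {d : ℕ} {R : ℝ} {p : Euc d × Euc d}
    (hp : p ∈ Ball1 d R ×ˢ Ball1 d R) : ‖p‖ ≤ R :=
  norm_prod_le_iff.2 ⟨norm_le_of_mem_Ball1 hp.1, norm_le_of_mem_Ball1 hp.2⟩

theorem LipschitzWith.exists_differentiableAt_mem_ball {E F : Type*} [NormedAddCommGroup E]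
    [NormedSpace ℝ E] [FiniteDimensional ℝ E] [NormedAddCommGroup F] [NormedSpace ℝ F]
    [FiniteDimensional ℝ F] {f : E → F} {C : NNReal} (hf : LipschitzWith C f) (x : E) {ε : ℝ}
    (hε : 0 < ε) : ∃ y ∈ ball x ε, DifferentiableAt ℝ f y := by
  borelize E
  by_contra! h
  have hnull := measure_mono_null h (ae_iff.1 (hf.ae_differentiableAt (μ := Measure.addHaar)))
  exact (measure_ball_pos Measure.addHaar x hε).ne' hnull

section Stegall

variable {E : Type*} [NormedAddCommGroup E] [NormedSpace ℝ E] {K : Set E} {f : E → ℝ}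

def lowerEnvelope (K : Set E) (f : E → ℝ) (φ : StrongDual ℝ E) : ℝ :=
  sInf ((fun p => f p - φ p) '' K)

theorem lowerEnvelope_eq_of_isMinOn {φ : StrongDual ℝ E} {p : E} (hp : p ∈ K)
    (hmin : IsMinOn (fun p => f p - φ p) K p) : lowerEnvelope K f φ = f p - φ p :=
  IsLeast.csInf_eq ⟨Set.mem_image_of_mem _ hp, by rintro _ ⟨q, hq, rfl⟩; exact hmin hq⟩

theorem lowerEnvelope_le (hK : IsCompact K) (hf : ContinuousOn f K) (φ : StrongDual ℝ E) {p : E}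
    (hp : p ∈ K) : lowerEnvelope K f φ ≤ f p - φ p :=
  csInf_le (hK.image_of_continuousOn (hf.sub φ.continuous.continuousOn)).bddBelow
    (Set.mem_image_of_mem _ hp)

theorem lipschitzWith_lowerEnvelope (hK : IsCompact K) (hne : K.Nonempty) (hf : ContinuousOn f K)
    {C : NNReal} (hC : ∀ p ∈ K, ‖p‖ ≤ C) : LipschitzWith C (lowerEnvelope K f) := by
  refine LipschitzWith.of_le_add_mul C fun φ ψ => ?_
  obtain ⟨p, hpK, hp⟩ := hK.exists_isMinOn hne (hf.sub ψ.continuous.continuousOn)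
  calc lowerEnvelope K f φ ≤ f p - φ p := lowerEnvelope_le hK hf φ hpK
    _ = (f p - ψ p) + (ψ - φ) p := by simp
    _ ≤ lowerEnvelope K f ψ + C * dist φ ψ := by
        rw [lowerEnvelope_eq_of_isMinOn hpK hp, dist_eq_norm']
        gcongr
        calc (ψ - φ) p ≤ ‖ψ - φ‖ * ‖p‖ := (Real.le_norm_self _).trans ((ψ - φ).le_opNorm p)
          _ ≤ ‖ψ - φ‖ * C := by gcongr; exact hC p hpK
          _ = C * ‖ψ - φ‖ := mul_comm _ _

theorem fderiv_lowerEnvelope (hK : IsCompact K) (hf : ContinuousOn f K) {φ : StrongDual ℝ E}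
    (hφ : DifferentiableAt ℝ (lowerEnvelope K f) φ) {p : E} (hp : p ∈ K)
    (hmin : IsMinOn (fun p => f p - φ p) K p) :
    fderiv ℝ (lowerEnvelope K f) φ = -ContinuousLinearMap.apply ℝ ℝ p := by
  have hmax : IsMaxOn (fun ψ : StrongDual ℝ E => lowerEnvelope K f ψ + ψ p) Set.univ φ := by
    intro ψ _
    have := lowerEnvelope_le hK hf ψ hp
    show lowerEnvelope K f ψ + ψ p ≤ lowerEnvelope K f φ + φ p
    rw [lowerEnvelope_eq_of_isMinOn hp hmin]
    linarith
  have := (hmax.isLocalMax univ_mem).hasFDerivAt_eq_zero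
    (hφ.hasFDerivAt.add (ContinuousLinearMap.apply ℝ ℝ p).hasFDerivAt)
  exact eq_neg_of_add_eq_zero_left this

/-- Stegall's variational principle in finite dimension: the value function
`φ ↦ min_K (f - φ)` is Lipschitz, hence (Rademacher) differentiable at some `φ` with `‖φ‖ < ε`,
and there its derivative is minus the evaluation at any minimizer; evaluations separate points. -/
theorem IsCompact.exists_dual_sub_strictMinOn [FiniteDimensional ℝ E] (hK : IsCompact K)
    (hne : K.Nonempty) (hf : ContinuousOn f K) {ε : ℝ} (hε : 0 < ε) :
    ∃ φ : StrongDual ℝ E, ‖φ‖ < ε ∧ ∃ p₀ ∈ K, ∀ p ∈ K, p ≠ p₀ → f p₀ - φ p₀ < f p - φ p := by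
  obtain ⟨C, hC⟩ := hK.isBounded.exists_norm_le
  obtain ⟨φ, hφ, hdiff⟩ := (lipschitzWith_lowerEnvelope hK hne hf (C := C.toNNReal)
    fun p hp => (hC p hp).trans (Real.le_coe_toNNReal C)).exists_differentiableAt_mem_ball 0 hε
  obtain ⟨p₀, hp₀K, hp₀⟩ := hK.exists_isMinOn hne (hf.sub φ.continuous.continuousOn)
  refine ⟨φ, mem_ball_zero_iff.1 hφ, p₀, hp₀K, fun p hpK hne' => ?_⟩
  by_contra! hle
  have hp : IsMinOn (fun p => f p - φ p) K p := fun q hq => hle.trans (hp₀ hq)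
  have happly := (fderiv_lowerEnvelope hK hf hdiff hpK hp).symm.trans
    (fderiv_lowerEnvelope hK hf hdiff hp₀K hp₀)
  exact hne' <| (SeparatingDual.eq_iff_forall_dual_eq (R := ℝ)).2 fun g => by
    simpa using congrArg (fun L : StrongDual ℝ (StrongDual ℝ E) => L g) happly

end Stegall

section Doubling

variable {E : Type*} [NormedAddCommGroup E] [InnerProductSpace ℝ E]

def doubling (U V : E → E) (p : E × E) : ℝ := ⟪U p.1 - V p.2, p.1 - p.2⟫

theorem ContinuousOn.doubling {U V : E → E} {s : Set E} (hU : ContinuousOn U s)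
    (hV : ContinuousOn V s) : ContinuousOn (doubling U V) (s ×ˢ s) :=
  ((hU.comp continuousOn_fst fun _ hp => hp.1).sub
    (hV.comp continuousOn_snd fun _ hp => hp.2)).inner
    (continuous_fst.sub continuous_snd).continuousOn

theorem inner_sub_add_left_eq_doubling (U V : E → E) (a b x y : E) :
    ⟪U x - (V y + a), x - y⟫ = doubling U V (x, y) - (⟪a, x⟫ + ⟪b, y⟫) + (⟪a, y⟫ + ⟪b, y⟫) := by
  simp only [doubling, inner_sub_left, inner_sub_right, inner_add_left]
  ring

theorem inner_sub_add_right_eq_doubling (U V : E → E) (a b x y : E) :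
    ⟪V y - (U x + b), y - x⟫ = doubling U V (x, y) - (⟪a, x⟫ + ⟪b, y⟫) + (⟪a, x⟫ + ⟪b, x⟫) := by
  simp only [doubling, inner_sub_left, inner_sub_right, inner_add_left]
  ring

theorem neg_inner_add_le_of_test_inequalities [CompleteSpace E] {r lam : ℝ} {T : E →L[ℝ] E}
    {x y u v uT vT g₁ g₂ f₁ f₂ a b : E}
    (hmono : 0 ≤ ⟪g₁ - g₂, x - y⟫ + ⟪f₁ - f₂, u - v⟫)
    (hx : ⟪g₁, x - y⟫ + ⟪f₁, u - (v + a)⟫ ≤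
      r * ⟪u, x - y⟫ + lam * ⟪u - ContinuousLinearMap.adjoint T uT, x - y⟫)
    (hy : ⟪g₂, y - x⟫ + ⟪f₂, v - (u + b)⟫ ≤
      r * ⟪v, y - x⟫ + lam * ⟪v - ContinuousLinearMap.adjoint T vT, y - x⟫) :
    -(⟪a, f₁⟫ + ⟪b, f₂⟫) ≤ (r + lam) * ⟪u - v, x - y⟫ - lam * ⟪uT - vT, T x - T y⟫ := by
  simp only [inner_sub_left, inner_sub_right, inner_add_right,
    ContinuousLinearMap.adjoint_inner_left, real_inner_comm a, real_inner_comm b] at *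
  linarith

end Doubling

theorem StrongDual.exists_apply_prod_eq_inner_add_inner {E F : Type*} [NormedAddCommGroup E]
    [InnerProductSpace ℝ E] [CompleteSpace E] [NormedAddCommGroup F] [InnerProductSpace ℝ F]
    [CompleteSpace F] (φ : StrongDual ℝ (E × F)) :
    ∃ (a : E) (b : F), ∀ u v, φ (u, v) = ⟪a, u⟫ + ⟪b, v⟫ := by
  refine ⟨(InnerProductSpace.toDual ℝ E).symm (φ.comp (.inl ℝ E F)),
    (InnerProductSpace.toDual ℝ F).symm (φ.comp (.inr ℝ E F)), fun u v => ?_⟩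
  simp only [InnerProductSpace.toDual_symm_apply, ContinuousLinearMap.comp_apply,
    ContinuousLinearMap.inl_apply, ContinuousLinearMap.inr_apply, ← map_add, Prod.mk_add_mk,
    add_zero, zero_add]

theorem sub_le_two_mul_of_isMinOn_sub_dual {E : Type*} [NormedAddCommGroup E] [NormedSpace ℝ E]
    {K : Set E} {f : E → ℝ} {φ : StrongDual ℝ E} {p₀ p : E} {M : ℝ}
    (hmin : IsMinOn (fun q => f q - φ q) K p₀) (hp : p ∈ K) (hp₀M : ‖p₀‖ ≤ M) (hpM : ‖p‖ ≤ M) :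
    f p₀ - f p ≤ 2 * ‖φ‖ * M := by
  have hle : f p₀ - φ p₀ ≤ f p - φ p := hmin hp
  have hφ : φ (p₀ - p) ≤ ‖φ‖ * (2 * M) :=
    calc φ (p₀ - p) ≤ ‖φ‖ * ‖p₀ - p‖ := (Real.le_norm_self _).trans (φ.le_opNorm _)
      _ ≤ ‖φ‖ * (2 * M) := by
        gcongr
        linarith [norm_sub_le p₀ p]
  rw [map_sub] at hφ
  linarith

section Solutions

variable {d : ℕ} {F G : Euc d → Euc d → Euc d} {r lam : ℝ} {T : Euc d →L[ℝ] Euc d} {R : ℝ}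
  {U V : Euc d → Euc d}

variable (d F G r lam T R) in
def SatisfiesMasterIneqOn (U : Euc d → Euc d) : Prop :=
  ∀ V : Euc d, ∀ y ∈ Od d, ∀ x₀ ∈ Ball1 d R,
    (∀ x ∈ Ball1 d R, x ≠ x₀ → ⟪U x₀ - V, x₀ - y⟫ < ⟪U x - V, x - y⟫) →
    ⟪G x₀ (U x₀), x₀ - y⟫ + ⟪F x₀ (U x₀), U x₀ - V⟫ ≤
      r * ⟪U x₀, x₀ - y⟫
        + lam * ⟪U x₀ - ContinuousLinearMap.adjoint T (U (T x₀)), x₀ - y⟫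

theorem neg_dual_le_doubling_of_strictMinOn
    (hyp3 : ∀ x ∈ Od d, ∀ y ∈ Od d, ∀ p q : Euc d,
      0 ≤ ⟪G x p - G y q, x - y⟫ + ⟪F x p - F y q, p - q⟫)
    (hU : SatisfiesMasterIneqOn d F G r lam T R U) (hV : SatisfiesMasterIneqOn d F G r lam T R V)
    {φ : StrongDual ℝ (Euc d × Euc d)} {p₀ : Euc d × Euc d} (hp₀ : p₀ ∈ Ball1 d R ×ˢ Ball1 d R)
    (hmin : ∀ p ∈ Ball1 d R ×ˢ Ball1 d R, p ≠ p₀ →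
      doubling U V p₀ - φ p₀ < doubling U V p - φ p) :
    -φ (F p₀.1 (U p₀.1), F p₀.2 (V p₀.2)) ≤
      (r + lam) * doubling U V p₀ - lam * doubling U V (T p₀.1, T p₀.2) := by
  obtain ⟨x₀, y₀⟩ := p₀
  obtain ⟨hx₀, hy₀⟩ := hp₀
  obtain ⟨a, b, hφ⟩ := φ.exists_apply_prod_eq_inner_add_inner
  have hx := hU (V y₀ + a) y₀ hy₀.1 x₀ hx₀ fun x hx hne => by
    have := hmin (x, y₀) ⟨hx, hy₀⟩ (by simp [hne])
    rw [hφ, hφ] at this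
    rw [inner_sub_add_left_eq_doubling U V a b, inner_sub_add_left_eq_doubling U V a b]
    linarith
  have hy := hV (U x₀ + b) x₀ hx₀.1 y₀ hy₀ fun y hy hne => by
    have := hmin (x₀, y) ⟨hx₀, hy⟩ (by simp [hne])
    rw [hφ, hφ] at this
    rw [inner_sub_add_right_eq_doubling U V a b, inner_sub_add_right_eq_doubling U V a b]
    linarith
  rw [hφ]
  exact neg_inner_add_le_of_test_inequalities (hyp3 x₀ hx₀.1 y₀ hy₀.1 (U x₀) (V y₀)) hx hy

theorem exists_neg_mul_le_mul_doubling
    (hFc : Continuous fun q : Euc d × Euc d => F q.1 q.2) (hr : 0 ≤ r) (hlam : 0 ≤ lam)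
    (hyp3 : ∀ x ∈ Od d, ∀ y ∈ Od d, ∀ p q : Euc d,
      0 ≤ ⟪G x p - G y q, x - y⟫ + ⟪F x p - F y q, p - q⟫)
    (hT : ∀ x ∈ Ball1 d R, T x ∈ Ball1 d R)
    (hU : SatisfiesMasterIneqOn d F G r lam T R U) (hV : SatisfiesMasterIneqOn d F G r lam T R V)
    (hUc : ContinuousOn U (Ball1 d R)) (hVc : ContinuousOn V (Ball1 d R)) :
    ∃ C, ∀ ε > 0, ∀ p ∈ Ball1 d R ×ˢ Ball1 d R, -(ε * C) ≤ r * doubling U V p := by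
  have hK := (isCompact_Ball1 d R).prod (isCompact_Ball1 d R)
  have hFUV : ContinuousOn (fun p => (F p.1 (U p.1), F p.2 (V p.2))) (Ball1 d R ×ˢ Ball1 d R) :=
    (hFc.comp_continuousOn
      (continuousOn_fst.prodMk (hUc.comp continuousOn_fst fun _ h => h.1))).prodMk
      (hFc.comp_continuousOn (continuousOn_snd.prodMk (hVc.comp continuousOn_snd fun _ h => h.2)))
  obtain ⟨CF, hCF⟩ := hK.exists_bound_of_continuousOn hFUV
  refine ⟨CF + 2 * lam * R + 2 * r * R, fun ε hε p hp => ?_⟩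
  obtain ⟨φ, hφε, p₀, hp₀, hmin⟩ := hK.exists_dual_sub_strictMinOn ⟨p, hp⟩ (hUc.doubling hVc) hε
  have hmin' : IsMinOn (fun q => doubling U V q - φ q) (Ball1 d R ×ˢ Ball1 d R) p₀ := fun q hq => by
    rcases eq_or_ne q p₀ with rfl | hne
    exacts [le_refl (doubling U V q - φ q), (hmin q hq hne).le]
  have hTp₀ : (T p₀.1, T p₀.2) ∈ Ball1 d R ×ˢ Ball1 d R := ⟨hT _ hp₀.1, hT _ hp₀.2⟩
  have hkey := neg_dual_le_doubling_of_strictMinOn hyp3 hU hV hp₀ hmin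
  have hshift := sub_le_two_mul_of_isMinOn_sub_dual hmin' hTp₀ (norm_le_of_mem_Ball1_prod hp₀)
    (norm_le_of_mem_Ball1_prod hTp₀)
  have hmove := sub_le_two_mul_of_isMinOn_sub_dual hmin' hp (norm_le_of_mem_Ball1_prod hp₀)
    (norm_le_of_mem_Ball1_prod hp)
  have hF : |φ (F p₀.1 (U p₀.1), F p₀.2 (V p₀.2))| ≤ ‖φ‖ * CF :=
    (φ.le_opNorm _).trans (by gcongr; exact hCF p₀ hp₀)
  have hR : 0 ≤ R := (norm_nonneg _).trans (norm_le_of_mem_Ball1_prod hp)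
  have hC : 0 ≤ CF + 2 * lam * R + 2 * r * R := by
    have := (norm_nonneg _).trans (hCF p hp)
    positivity
  have hr' := mul_le_mul_of_nonneg_left hmove hr
  have hlam' := mul_le_mul_of_nonneg_left hshift hlam
  have hε' := mul_le_mul_of_nonneg_right hφε.le hC
  linear_combination
    hkey + hr' + hlam' + hε' + hF + le_abs_self (φ (F p₀.1 (U p₀.1), F p₀.2 (V p₀.2)))

theorem IsMonotoneSolS.doubling_nonneg {R₀ : ℝ}
    (hFc : Continuous fun q : Euc d × Euc d => F q.1 q.2) (hr : 0 < r) (hlam : 0 ≤ lam)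
    (hyp2T : ∀ R ≥ R₀, ∀ x ∈ Ball1 d R, T x ∈ Ball1 d R)
    (hyp3 : ∀ x ∈ Od d, ∀ y ∈ Od d, ∀ p q : Euc d,
      0 ≤ ⟪G x p - G y q, x - y⟫ + ⟪F x p - F y q, p - q⟫)
    (hU : IsMonotoneSolS d F G r lam T R₀ U) (hV : IsMonotoneSolS d F G r lam T R₀ V)
    {x y : Euc d} (hx : x ∈ Od d) (hy : y ∈ Od d) : 0 ≤ doubling U V (x, y) := by
  obtain ⟨RU, hRU, hUsol⟩ := hU.2
  obtain ⟨RV, -, hVsol⟩ := hV.2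
  set R := max (max RU RV) (max (∑ i, x i) (∑ i, y i))
  have hRU' : RU ≤ R := (le_max_left _ _).trans (le_max_left _ _)
  have hRV' : RV ≤ R := (le_max_right _ _).trans (le_max_left _ _)
  have hxy : (x, y) ∈ Ball1 d R ×ˢ Ball1 d R :=
    ⟨⟨hx, (le_max_left _ _).trans (le_max_right _ _)⟩,
      ⟨hy, (le_max_right _ _).trans (le_max_right _ _)⟩⟩
  obtain ⟨C, hC⟩ := exists_neg_mul_le_mul_doubling hFc hr.le hlam hyp3
    (hyp2T R (hRU.trans hRU')) (hUsol R hRU') (hVsol R hRV') (hU.1.mono fun _ h => h.1)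
    (hV.1.mono fun _ h => h.1)
  have hlim : Tendsto (fun ε : ℝ => -(ε * C)) (𝓝[>] 0) (𝓝 0) :=
    ((by fun_prop : Continuous fun ε : ℝ => -(ε * C)).tendsto' 0 0 (by simp)).mono_left
      nhdsWithin_le_nhds
  have hrW : 0 ≤ r * doubling U V (x, y) :=
    le_of_tendsto hlim (eventually_mem_nhdsWithin.mono fun ε hε => hC ε hε _ hxy)
  exact (mul_nonneg_iff_of_pos_left hr).1 hrW

end Solutions

theorem inner_sub_le_zero_of_forall_pos {E : Type*} [NormedAddCommGroup E] [InnerProductSpace ℝ E]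
    {s : Set E} {x v a : E} {B : E → E} (hB : ContinuousWithinAt B s x)
    (hs : ∀ t : ℝ, 0 < t → x + t • v ∈ s)
    (h : ∀ t : ℝ, 0 < t → 0 ≤ ⟪a - B (x + t • v), x - (x + t • v)⟫) :
    ⟪a - B x, v⟫ ≤ 0 := by
  have hray : Tendsto (fun t : ℝ => x + t • v) (𝓝[>] 0) (𝓝[s] x) :=
    tendsto_nhdsWithin_iff.2
      ⟨((by fun_prop : Continuous fun t : ℝ => x + t • v).tendsto' 0 x (by simp)).mono_left
        nhdsWithin_le_nhds, eventually_mem_nhdsWithin.mono fun t ht => hs t ht⟩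
  refine le_of_tendsto ((tendsto_const_nhds.sub (hB.tendsto.comp hray)).inner tendsto_const_nhds)
    (eventually_mem_nhdsWithin.mono fun t (ht : t ∈ Set.Ioi (0 : ℝ)) => ?_)
  show ⟪a - B (x + t • v), v⟫ ≤ 0
  have := h t ht
  rw [sub_add_cancel_left, inner_neg_right, real_inner_smul_right] at this
  exact nonpos_of_mul_nonpos_right (by linarith) ht

theorem add_smul_single_mem_Od {d : ℕ} {x : Euc d} (hx : x ∈ Od d) (i : Fin d) {t : ℝ}
    (ht : 0 ≤ t) : x + t • EuclideanSpace.single i 1 ∈ Od d := fun j => by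
  simp only [PiLp.add_apply, PiLp.smul_apply, PiLp.single_apply, smul_eq_mul]
  split_ifs <;> linarith [hx j]

theorem apply_le_of_doubling_nonneg {d : ℕ} {U V : Euc d → Euc d} (hV : ContinuousOn V (Od d))
    {x : Euc d} (hx : x ∈ Od d) (h : ∀ y ∈ Od d, 0 ≤ doubling U V (x, y)) (i : Fin d) :
    U x i ≤ V x i := by
  have := inner_sub_le_zero_of_forall_pos (a := U x) (v := EuclideanSpace.single i 1) (hV x hx)
    (fun t ht => add_smul_single_mem_Od hx i ht.le)
    (fun t ht => h _ (add_smul_single_mem_Od hx i ht.le))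
  rw [EuclideanSpace.inner_single_right, PiLp.sub_apply] at this
  simpa using this

theorem eq_of_doubling_nonneg {d : ℕ} {U V : Euc d → Euc d} (hU : ContinuousOn U (Od d))
    (hV : ContinuousOn V (Od d)) (hUV : ∀ x ∈ Od d, ∀ y ∈ Od d, 0 ≤ doubling U V (x, y))
    (hVU : ∀ x ∈ Od d, ∀ y ∈ Od d, 0 ≤ doubling V U (x, y)) {x : Euc d} (hx : x ∈ Od d) :
    U x = V x := by
  ext i
  exact le_antisymm (apply_le_of_doubling_nonneg hV hx (hUV x hx) i)
    (apply_le_of_doubling_nonneg hU hx (hVU x hx) i)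

theorem uniqueness_and_monotonicity_monotone_stationary_general
    (d : ℕ)
    (F G : Euc d → Euc d → Euc d)
    (hFc : Continuous fun q : Euc d × Euc d => F q.1 q.2)
    (r lam : ℝ) (hr : 0 < r) (hlam : 0 ≤ lam) (T : Euc d →L[ℝ] Euc d)
    -- Hypothesis 2
    (R₀ : ℝ)
    (hyp2T : ∀ R ≥ R₀, ∀ x ∈ Ball1 d R, T x ∈ Ball1 d R)
    -- Hypothesis 3
    (hyp3 : ∀ x ∈ Od d, ∀ y ∈ Od d, ∀ p q : Euc d,
      0 ≤ ⟪G x p - G y q, x - y⟫ + ⟪F x p - F y q, p - q⟫) :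
    (∀ U V : Euc d → Euc d, IsMonotoneSolS d F G r lam T R₀ U →
        IsMonotoneSolS d F G r lam T R₀ V → ∀ x ∈ Od d, U x = V x) ∧
    (∀ U : Euc d → Euc d, IsMonotoneSolS d F G r lam T R₀ U →
        ∀ x ∈ Od d, ∀ y ∈ Od d, 0 ≤ ⟪U x - U y, x - y⟫) := by
  refine ⟨fun U V hU hV _ hx => eq_of_doubling_nonneg hU.1 hV.1 (fun _ hx _ hy => ?_)
    (fun _ hx _ hy => ?_) hx, fun U hU _ hx _ hy => ?_⟩
  exacts [hU.doubling_nonneg hFc hr hlam hyp2T hyp3 hV hx hy,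
    hV.doubling_nonneg hFc hr hlam hyp2T hyp3 hU hx hy,
    hU.doubling_nonneg hFc hr hlam hyp2T hyp3 hU hx hy]

/-- Theorem 2.1: under Hypotheses 1-3, there is at most one continuous monotone solution of
the stationary master equation; if it exists, it is a monotone map. -/
theorem uniqueness_and_monotonicity_monotone_stationary
    (d : ℕ) (hd : 1 ≤ d)
    (F G : Euc d → Euc d → Euc d)
    (hFc : Continuous fun q : Euc d × Euc d => F q.1 q.2)
    (hGc : Continuous fun q : Euc d × Euc d => G q.1 q.2)
    (r lam : ℝ) (hr : 0 < r) (hlam : 0 ≤ lam) (T : Euc d →L[ℝ] Euc d)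
    -- Hypothesis 1
    (hyp1F : ∀ x ∈ Od d, ∀ p : Euc d, ∀ i, x i = 0 → F x p i ≤ 0)
    (hyp1T : ∀ x ∈ Od d, T x ∈ Od d)
    -- Hypothesis 2
    (R₀ : ℝ) (hR₀ : 0 < R₀)
    (hyp2F : ∀ x ∈ Od d, ∀ p : Euc d, R₀ ≤ ∑ i, x i → 0 ≤ ∑ i, F x p i)
    (hyp2T : ∀ R ≥ R₀, ∀ x ∈ Ball1 d R, T x ∈ Ball1 d R)
    -- Hypothesis 3
    (hyp3 : ∀ x ∈ Od d, ∀ y ∈ Od d, ∀ p q : Euc d,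
      0 ≤ ⟪G x p - G y q, x - y⟫ + ⟪F x p - F y q, p - q⟫) :
    (∀ U V : Euc d → Euc d, IsMonotoneSolS d F G r lam T R₀ U →
        IsMonotoneSolS d F G r lam T R₀ V → ∀ x ∈ Od d, U x = V x) ∧
    (∀ U : Euc d → Euc d, IsMonotoneSolS d F G r lam T R₀ U →
        ∀ x ∈ Od d, ∀ y ∈ Od d, 0 ≤ ⟪U x - U y, x - y⟫) :=
  uniqueness_and_monotonicity_monotone_stationary_general d F G hFc r lam hr hlam T R₀ hyp2T hyp3
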